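/- Let L be a simple finite-dimensional anticommutative algebra over a field F of characteristic zero and let r = Σᵢ aᵢ⊗bᵢ ∈ L⊗L be a non skew-symmetric solution of the classical Yang–Baxter equation such that r + τ(r) is L-invariant. Then there exist a non-degenerate symmetric associative bilinear form ω on L and a non-zero scalar λ ∈ F such that the linear operator R : L → L defined by R(a) = Σᵢ ω(aᵢ, a)·bᵢ is a Rota–Baxter operator of weight λ. -/

import Mathlib

open TensorProduct

/-- `R` is a Rota–Baxter operator of weight `lam` for the bilinear product `mul`. -/
def IsRotaBaxter {F L : Type*} [Field F] [AddCommGroup L] [Module F L]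
    (mul : L →ₗ[F] L →ₗ[F] L) (R : L → L) (lam : F) : Prop :=
  ∀ x y : L, mul (R x) (R y) = R (mul (R x) y + mul x (R y) + lam • mul x y)

/-- The classical Yang–Baxter equation for `r = ∑ i, a i ⊗ b i`. -/
def CYBE {F L : Type*} [Field F] [AddCommGroup L] [Module F L]
    (mul : L →ₗ[F] L →ₗ[F] L) {n : ℕ} (a b : Fin n → L) : Prop :=
  ∑ i : Fin n, ∑ j : Fin n,
      (mul (a i) (a j) ⊗ₜ[F] (b i ⊗ₜ[F] b j)
        - a i ⊗ₜ[F] (mul (a j) (b i) ⊗ₜ[F] b j)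
        + a i ⊗ₜ[F] (a j ⊗ₜ[F] mul (b i) (b j))) = 0

/-!
The symmetric tensor `s = r + τ(r)` defines `P : L* → L`, `f ↦ (f ⊗ id)(s)`. Invariance of `s`
makes the image of `P` an ideal, nonzero since `r` is not skew-symmetric, so by simplicity and a
dimension count `P` is an isomorphism. Then `ω(x, y) := P⁻¹(x)(y)` is a nondegenerate symmetric
associative form for which `s` is the Casimir element: `∑ᵢ ω(aᵢ, c) bᵢ + ω(bᵢ, c) aᵢ = c`.
Contracting the CYBE with `ω(·, x) ⊗ ω(·, y) ⊗ id` and substituting this identity gives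
`R(x)R(y) = R(R(x)y + xR(y) - xy)`, i.e. weight `-1`.
-/

section Contraction

variable {F L : Type*} [Field F] [AddCommGroup L] [Module F L]

noncomputable def contractFst : Module.Dual F L →ₗ[F] L ⊗[F] L →ₗ[F] L :=
  (LinearMap.rTensorHom L).compr₂ (TensorProduct.lid F L).toLinearMap

@[simp] lemma contractFst_tmul (f : Module.Dual F L) (x y : L) :
    contractFst f (x ⊗ₜ[F] y) = f x • y := by
  simp [contractFst]

lemma dual_apply_contractFst (f g : Module.Dual F L) (t : L ⊗[F] L) :
    g (contractFst f t) = dualDistrib F L L (f ⊗ₜ g) t := by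
  induction t using TensorProduct.induction_on <;> simp_all

lemma dual_apply_contractFst_comm (f g : Module.Dual F L) (t : L ⊗[F] L) :
    g (contractFst f t) = f (contractFst g (TensorProduct.comm F L L t)) := by
  rw [dual_apply_contractFst, dual_apply_contractFst, dualDistrib_apply_comm, comm_tmul]

lemma contractFst_rTensor (f : Module.Dual F L) (g : L →ₗ[F] L) (t : L ⊗[F] L) :
    contractFst f (g.rTensor L t) = contractFst (f ∘ₗ g) t := by
  induction t using TensorProduct.induction_on <;> simp_all

lemma contractFst_lTensor (f : Module.Dual F L) (g : L →ₗ[F] L) (t : L ⊗[F] L) :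
    contractFst f (g.lTensor L t) = g (contractFst f t) := by
  induction t using TensorProduct.induction_on <;> simp_all

lemma eq_zero_of_forall_contractFst_eq_zero [FiniteDimensional F L] {t : L ⊗[F] L}
    (h : ∀ f : Module.Dual F L, contractFst f t = 0) : t = 0 := by
  refine (Module.forall_dual_apply_eq_zero_iff F t).mp fun φ => ?_
  obtain ⟨w, rfl⟩ := (dualDistribEquiv F L L).surjective φ
  induction w using TensorProduct.induction_on with
  | zero => simp
  | tmul f g =>
    change dualDistrib F L L (f ⊗ₜ g) t = 0
    rw [← dual_apply_contractFst, h, map_zero]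
  | add w w' hw hw' => simp_all

end Contraction

section InvariantForm

variable {F L : Type*} [Field F] [AddCommGroup L] [Module F L] (mul : L →ₗ[F] L →ₗ[F] L)

def IsInvariantTensor (s : L ⊗[F] L) : Prop :=
  ∀ c : L, (mul.flip c).rTensor L s + (mul.flip c).lTensor L s = 0

variable {mul} {s : L ⊗[F] L}

lemma IsInvariantTensor.mul_contractFst (hs : IsInvariantTensor mul s)
    (f : Module.Dual F L) (c : L) :
    mul (contractFst f s) c = -contractFst (f ∘ₗ mul.flip c) s := by
  have h := congrArg (contractFst f) (hs c)
  rw [map_add, contractFst_rTensor, contractFst_lTensor, map_zero] at h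
  exact eq_neg_of_add_eq_zero_right h

lemma IsInvariantTensor.mul_mem_range_contractFst (hanti : mul.IsAlt)
    (hs : IsInvariantTensor mul s)
    {x : L} (hx : x ∈ LinearMap.range (contractFst.flip s)) (y : L) :
    mul x y ∈ LinearMap.range (contractFst.flip s) ∧
      mul y x ∈ LinearMap.range (contractFst.flip s) := by
  obtain ⟨f, rfl⟩ := hx
  have hxy : mul (contractFst.flip s f) y ∈ LinearMap.range (contractFst.flip s) := by
    rw [LinearMap.flip_apply, hs.mul_contractFst]
    exact neg_mem (LinearMap.mem_range_self _ _)
  refine ⟨hxy, ?_⟩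
  rw [← hanti.neg]
  exact neg_mem hxy

lemma IsInvariantTensor.bijective_contractFst [FiniteDimensional F L] (hanti : mul.IsAlt)
    (hsimple : ∀ I : Submodule F L,
      (∀ x ∈ I, ∀ y : L, mul x y ∈ I ∧ mul y x ∈ I) → I = ⊥ ∨ I = ⊤)
    (hs : IsInvariantTensor mul s) (hs0 : s ≠ 0) :
    Function.Bijective (contractFst.flip s) := by
  have hsurj : Function.Surjective (contractFst.flip s) := by
    refine (hsimple _ fun x hx y => hs.mul_mem_range_contractFst hanti hx y).resolve_left
      (fun hbot => hs0 ?_) |> LinearMap.range_eq_top.mp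
    refine eq_zero_of_forall_contractFst_eq_zero fun f => ?_
    simpa [hbot] using LinearMap.mem_range_self (contractFst.flip s) f
  refine ⟨?_, hsurj⟩
  exact (LinearMap.injective_iff_surjective_of_finrank_eq_finrank
    (Subspace.dual_finrank_eq (K := F) (V := L))).mpr hsurj

theorem exists_nondegenerate_invariant_form [FiniteDimensional F L] (hanti : mul.IsAlt)
    (hsimple : ∀ I : Submodule F L,
      (∀ x ∈ I, ∀ y : L, mul x y ∈ I ∧ mul y x ∈ I) → I = ⊥ ∨ I = ⊤)
    (hsymm : TensorProduct.comm F L L s = s) (hs : IsInvariantTensor mul s) (hs0 : s ≠ 0) :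
    ∃ ω : L →ₗ[F] L →ₗ[F] F,
      (∀ x : L, (∀ y : L, ω x y = 0) → x = 0) ∧
      (∀ x y : L, ω x y = ω y x) ∧
      (∀ x y z : L, ω (mul x y) z = ω x (mul y z)) ∧
      ∀ c : L, contractFst (ω c) s = c := by
  let e := LinearEquiv.ofBijective _ (hs.bijective_contractFst hanti hsimple hs0)
  have hcompl (c : L) : contractFst (e.symm c) s = c := e.apply_symm_apply c
  have hform (f : Module.Dual F L) : e.symm (contractFst f s) = f := e.symm_apply_apply f
  refine ⟨e.symm.toLinearMap, fun x hx => ?_, fun x y => ?_, fun x y z => ?_, hcompl⟩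
  · rw [← hcompl x, show e.symm x = 0 from LinearMap.ext hx, map_zero, LinearMap.zero_apply]
  · conv_lhs => rw [← hcompl y]
    simp only [LinearEquiv.coe_coe]
    rw [dual_apply_contractFst_comm, hsymm, hcompl]
  · conv_lhs => rw [← hcompl x]
    simp only [LinearEquiv.coe_coe]
    rw [hs.mul_contractFst, map_neg, hform, LinearMap.neg_apply, LinearMap.comp_apply,
      LinearMap.flip_apply, ← hanti.neg, map_neg, neg_neg]

end InvariantForm

section RotaBaxter

variable {F L : Type*} [Field F] [AddCommGroup L] [Module F L] {mul : L →ₗ[F] L →ₗ[F] L}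
  {ω : L →ₗ[F] L →ₗ[F] F} {n : ℕ} (a b : Fin n → L)

noncomputable def rOperator (ω : L →ₗ[F] L →ₗ[F] F) : L →ₗ[F] L :=
  ∑ i, (ω (a i)).smulRight (b i)

lemma rOperator_apply (c : L) : rOperator a b ω c = ∑ i, ω (a i) c • b i := by
  simp [rOperator]

variable {a b}

lemma CYBE.contract (hcybe : CYBE mul a b) (x y : L) :
    ∑ i, ∑ j, (ω (mul (a i) (a j)) x • ω (b i) y • b j
      - ω (a i) x • ω (mul (a j) (b i)) y • b j
      + ω (a i) x • ω (a j) y • mul (b i) (b j)) = 0 := by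
  have h := congrArg (contractFst (ω.flip x) ∘ₗ (contractFst (ω.flip y)).lTensor L) hcybe
  simpa only [map_sum, map_add, map_sub, map_zero, LinearMap.comp_apply,
    LinearMap.lTensor_tmul, contractFst_tmul, LinearMap.flip_apply, map_smul] using h

theorem isRotaBaxter_of_cybe (hsymm : ∀ x y : L, ω x y = ω y x)
    (hassoc : ∀ x y z : L, ω (mul x y) z = ω x (mul y z)) (hcybe : CYBE mul a b)
    (hcompl : ∀ c : L, ∑ i, (ω (a i) c • b i + ω (b i) c • a i) = c) :
    IsRotaBaxter mul (fun c => ∑ i, ω (a i) c • b i) (-1) := by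
  intro x y
  simp only [← rOperator_apply]
  set R := rOperator a b ω
  have hRy : ∑ i, ω (b i) y • a i = y - R y := by
    rw [eq_sub_iff_add_eq', rOperator_apply, ← Finset.sum_add_distrib, hcompl]
  have hterm₁ : ∑ i, ∑ j, ω (mul (a i) (a j)) x • ω (b i) y • b j = R (mul x (y - R y)) := by
    rw [← hRy, map_sum, map_sum]
    refine Finset.sum_congr rfl fun i _ => ?_
    rw [map_smul, map_smul, rOperator_apply, Finset.smul_sum]
    refine Finset.sum_congr rfl fun j _ => ?_
    rw [hsymm (mul (a i) (a j)), ← hassoc, hsymm, smul_comm]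
  have hterm₂ : ∑ i, ∑ j, ω (a i) x • ω (mul (a j) (b i)) y • b j = R (mul (R x) y) := by
    rw [rOperator_apply a b x, map_sum, LinearMap.sum_apply, map_sum]
    refine Finset.sum_congr rfl fun i _ => ?_
    rw [map_smul, LinearMap.smul_apply, map_smul, rOperator_apply, Finset.smul_sum]
    simp only [hassoc]
  have hterm₃ : ∑ i, ∑ j, ω (a i) x • ω (a j) y • mul (b i) (b j) = mul (R x) (R y) := by
    simp only [R, rOperator_apply, map_sum, map_smul, LinearMap.sum_apply, LinearMap.smul_apply,
      Finset.smul_sum]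
    rw [Finset.sum_comm]
    exact Finset.sum_congr rfl fun i _ => Finset.sum_congr rfl fun j _ => smul_comm _ _ _
  have h := hcybe.contract (ω := ω) x y
  simp only [Finset.sum_add_distrib, Finset.sum_sub_distrib, hterm₁, hterm₂, hterm₃] at h
  rw [map_add, map_add, map_smul, neg_one_smul, ← sub_eq_zero, ← h, map_sub, map_sub]
  abel

end RotaBaxter

theorem stmt0 {F L : Type*} [Field F] [AddCommGroup L] [Module F L]
    [FiniteDimensional F L] (mul : L →ₗ[F] L →ₗ[F] L)
    -- `L` is anticommutative
    (hanti : ∀ x : L, mul x x = 0)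
    -- `L` is simple
    (hsimple : (∃ x y : L, mul x y ≠ 0) ∧
      ∀ I : Submodule F L, (∀ x ∈ I, ∀ y : L, mul x y ∈ I ∧ mul y x ∈ I) → I = ⊥ ∨ I = ⊤)
    -- `r = ∑ i, a i ⊗ b i` is a solution of the CYBE
    {n : ℕ} (a b : Fin n → L) (hcybe : CYBE mul a b)
    -- `r` is not skew-symmetric: `τ(r) ≠ -r`
    (hns : ∑ i, b i ⊗ₜ[F] a i ≠ -∑ i, a i ⊗ₜ[F] b i)
    -- `r + τ(r)` is `L`-invariant
    (hinv : ∀ c : L, ∑ i, (mul (a i) c ⊗ₜ[F] b i + a i ⊗ₜ[F] mul (b i) c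
        + mul (b i) c ⊗ₜ[F] a i + b i ⊗ₜ[F] mul (a i) c) = 0) :
    ∃ (ω : L →ₗ[F] L →ₗ[F] F) (lam : F),
      (∀ x : L, (∀ y : L, ω x y = 0) → x = 0) ∧
      (∀ x y : L, ω x y = ω y x) ∧
      (∀ x y z : L, ω (mul x y) z = ω x (mul y z)) ∧
      lam ≠ 0 ∧
      IsRotaBaxter mul (fun c => ∑ i, ω (a i) c • b i) lam := by
  set s : L ⊗[F] L := ∑ i, (a i ⊗ₜ[F] b i + b i ⊗ₜ[F] a i) with hs_def
  have hsymm_s : TensorProduct.comm F L L s = s := by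
    simp only [s, map_sum, map_add, comm_tmul, add_comm]
  have hinv_s : IsInvariantTensor mul s := fun c => by
    rw [← hinv c]
    simp only [s, map_sum, map_add, LinearMap.rTensor_tmul, LinearMap.lTensor_tmul,
      LinearMap.flip_apply, ← Finset.sum_add_distrib]
    exact Finset.sum_congr rfl fun i _ => by abel
  have hs0 : s ≠ 0 := fun h =>
    hns (eq_neg_of_add_eq_zero_right (by rwa [hs_def, Finset.sum_add_distrib] at h))
  obtain ⟨ω, hnd, hsymm, hassoc, hcompl⟩ :=
    exists_nondegenerate_invariant_form hanti hsimple.2 hsymm_s hinv_s hs0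
  refine ⟨ω, -1, hnd, hsymm, hassoc, neg_ne_zero.mpr one_ne_zero,
    isRotaBaxter_of_cybe hsymm hassoc hcybe fun c => ?_⟩
  simpa only [s, map_sum, map_add, contractFst_tmul, hsymm c] using hcompl c
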